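/- Assume in addition that 1 + u² is a unit of R and set z = −(u(1+u²))⁻¹. Let f be a conjugation-invariant functional on TL_{1,2} with values in an R-module M satisfying f(tσ_1) = z·f(t). Then the equation f(t) = −((1+u²)/u)·u⁶·f(t_1σ_1) holds if and only if (1 − u⁶)·(1 − u²)·f(t) = 0 in M. -/

import Mathlib

/-! Since `TL_{1,2} = H_{1,2}`, the only relation needed is the quadratic one
`σ₁² = (u − u⁻¹)σ₁ + 1`. Together with the trace property it gives
`f(t₁σ₁) = f(σ₁tσ₁σ₁) = ((u − u⁻¹)² + 1)·f(tσ₁) + (u − u⁻¹)·f(t)`, so under `f(tσ₁) = z·f(t)`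
the band-move equation reads `f(t) = c·f(t)` for a scalar `c`, and `1 − c` simplifies to
`(1 − u⁶)(1 − u²)` once `u·u⁻¹ = 1` and `(1 + u²)·v⁻¹ = 1` are used. -/

/- Common setup: the mixed braid group `B_{1,n}`, the generalized Hecke algebra
of type B `H_{1,n}(u)`, and the generalized Temperley–Lieb algebra of type B
`TL_{1,n}`, following the paper's presentations. The generator `none` is `t`
and `some i` is `σ_{i+1}` for `i : Fin (n-1)`. -/

/-- Generators of the mixed braid group `B_{1,n}`: `none` is `t`,
`some i` is `σ_{i+1}`. -/
abbrev B1Gen (n : ℕ) := Option (Fin (n - 1))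

/-- The generator `t` in the free group. -/
def tF (n : ℕ) : FreeGroup (B1Gen n) := FreeGroup.of none

/-- The generator `σ_{i+1}` in the free group. -/
def sF (n : ℕ) (i : Fin (n - 1)) : FreeGroup (B1Gen n) := FreeGroup.of (some i)

/-- The relators of the mixed braid group `B_{1,n}`:
`σ₁tσ₁t = tσ₁tσ₁`; `tσ_i = σ_it` for `i > 1`; the braid relations
`σ_iσ_{i+1}σ_i = σ_{i+1}σ_iσ_{i+1}`; and `σ_iσ_j = σ_jσ_i` for `|i−j| > 1`. -/
def mixedRels (n : ℕ) : Set (FreeGroup (B1Gen n)) :=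
  { r | (∃ i : Fin (n - 1), (i : ℕ) = 0 ∧
          r = sF n i * tF n * sF n i * tF n * (tF n * sF n i * tF n * sF n i)⁻¹) ∨
        (∃ i : Fin (n - 1), 0 < (i : ℕ) ∧
          r = tF n * sF n i * (sF n i * tF n)⁻¹) ∨
        (∃ i j : Fin (n - 1), (j : ℕ) = (i : ℕ) + 1 ∧
          r = sF n i * sF n j * sF n i * (sF n j * sF n i * sF n j)⁻¹) ∨
        (∃ i j : Fin (n - 1), (i : ℕ) + 1 < (j : ℕ) ∧
          r = sF n i * sF n j * (sF n j * sF n i)⁻¹) }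

/-- The mixed braid group `B_{1,n}`. -/
abbrev MixedBraidGroup (n : ℕ) := PresentedGroup (mixedRels n)

/-- The generator `t` of `B_{1,n}`. -/
def tB (n : ℕ) : MixedBraidGroup n := PresentedGroup.of none

/-- The generator `σ_{i+1}` of `B_{1,n}`. -/
def sB (n : ℕ) (i : Fin (n - 1)) : MixedBraidGroup n := PresentedGroup.of (some i)

variable (R : Type) [CommRing R] (u : Rˣ)

/-- The quadratic Hecke relations `σ_i² = (u − u⁻¹)σ_i + 1` in the group
algebra `R[B_{1,n}]`. -/
inductive heckeRel (n : ℕ) :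
    MonoidAlgebra R (MixedBraidGroup n) → MonoidAlgebra R (MixedBraidGroup n) → Prop where
  | quad (i : Fin (n - 1)) :
      heckeRel n
        (MonoidAlgebra.of R (MixedBraidGroup n) (sB n i) *
          MonoidAlgebra.of R (MixedBraidGroup n) (sB n i))
        (((u : R) - ((u⁻¹ : Rˣ) : R)) • MonoidAlgebra.of R (MixedBraidGroup n) (sB n i) + 1)

/-- The generalized Hecke algebra of type B, `H_{1,n}(u)`. -/
abbrev Hecke (n : ℕ) := RingQuot (heckeRel R u n)

/-- The canonical (multiplicative) map `B_{1,n} → H_{1,n}(u)`. -/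
noncomputable def toHecke (n : ℕ) : MixedBraidGroup n →* Hecke R u n :=
  (RingQuot.mkRingHom (heckeRel R u n)).toMonoidHom.comp
    (MonoidAlgebra.of R (MixedBraidGroup n))

/-- The Temperley–Lieb relations: the generators
`1 + u(σ_i + σ_{i+1}) + u²(σ_iσ_{i+1} + σ_{i+1}σ_i) + u³σ_iσ_{i+1}σ_i`
of the defining ideal are set to `0`. -/
inductive tlRel (n : ℕ) : Hecke R u n → Hecke R u n → Prop where
  | cubic (i j : Fin (n - 1)) (hij : (j : ℕ) = (i : ℕ) + 1) :
      tlRel n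
        (1 + (u : R) • (toHecke R u n (sB n i) + toHecke R u n (sB n j))
          + ((u : R) ^ 2) • (toHecke R u n (sB n i) * toHecke R u n (sB n j)
              + toHecke R u n (sB n j) * toHecke R u n (sB n i))
          + ((u : R) ^ 3) •
              (toHecke R u n (sB n i) * toHecke R u n (sB n j) * toHecke R u n (sB n i)))
        0

/-- The generalized Temperley–Lieb algebra of type B, `TL_{1,n}`. -/
abbrev TL (n : ℕ) := RingQuot (tlRel R u n)

/-- The canonical (multiplicative) map `B_{1,n} → TL_{1,n}`. -/
noncomputable def toTL (n : ℕ) : MixedBraidGroup n →* TL R u n :=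
  (RingQuot.mkRingHom (tlRel R u n)).toMonoidHom.comp (toHecke R u n)

/-- The element `t` of `TL_{1,n}`. -/
noncomputable def tT (n : ℕ) : TL R u n := toTL R u n (tB n)

/-- The element `σ₁` of `TL_{1,n}` (needs `2 ≤ n`). -/
noncomputable def σ₁T (n : ℕ) (hn : 2 ≤ n) : TL R u n :=
  toTL R u n (sB n ⟨0, by omega⟩)

/-- The element `σ₁⁻¹` of `TL_{1,n}`, the image of the inverse braid
generator (needs `2 ≤ n`). -/
noncomputable def σ₁invT (n : ℕ) (hn : 2 ≤ n) : TL R u n :=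
  toTL R u n (sB n ⟨0, by omega⟩)⁻¹

/-- The looping element `t₁ = σ₁ t σ₁` of `TL_{1,n}` (needs `2 ≤ n`). -/
noncomputable def t₁T (n : ℕ) (hn : 2 ≤ n) : TL R u n :=
  toTL R u n (sB n ⟨0, by omega⟩ * tB n * sB n ⟨0, by omega⟩)

theorem toHecke_apply (n : ℕ) (g : MixedBraidGroup n) :
    toHecke R u n g = RingQuot.mkAlgHom R (heckeRel R u n) (MonoidAlgebra.of R _ g) :=
  (RingHom.congr_fun (RingQuot.mkAlgHom_coe R _) _).symm

theorem toTL_apply (n : ℕ) (g : MixedBraidGroup n) :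
    toTL R u n g = RingQuot.mkAlgHom R (tlRel R u n) (toHecke R u n g) :=
  (RingHom.congr_fun (RingQuot.mkAlgHom_coe R _) _).symm

theorem toHecke_sB_mul_self (n : ℕ) (i : Fin (n - 1)) :
    toHecke R u n (sB n i) * toHecke R u n (sB n i)
      = ((u : R) - ((u⁻¹ : Rˣ) : R)) • toHecke R u n (sB n i) + 1 := by
  rw [toHecke_apply, ← map_mul, RingQuot.mkAlgHom_rel R (heckeRel.quad i), map_add, map_smul,
    map_one]

theorem toTL_sB_mul_self (n : ℕ) (i : Fin (n - 1)) :
    toTL R u n (sB n i) * toTL R u n (sB n i)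
      = ((u : R) - ((u⁻¹ : Rˣ) : R)) • toTL R u n (sB n i) + 1 := by
  rw [toTL_apply, ← map_mul, toHecke_sB_mul_self, map_add, map_smul, map_one]

theorem σ₁T_mul_self (n : ℕ) (hn : 2 ≤ n) :
    σ₁T R u n hn * σ₁T R u n hn = ((u : R) - ((u⁻¹ : Rˣ) : R)) • σ₁T R u n hn + 1 :=
  toTL_sB_mul_self R u n _

theorem t₁T_mul_σ₁T (n : ℕ) (hn : 2 ≤ n) :
    t₁T R u n hn * σ₁T R u n hn = σ₁T R u n hn * tT R u n * σ₁T R u n hn * σ₁T R u n hn := by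
  simp only [t₁T, σ₁T, tT, map_mul]

section

variable {R} {A M : Type*} [Ring A] [Algebra R A] [AddCommGroup M] [Module R M]

theorem apply_mul_mul_mul_self_of_mul_self_eq (f : A →ₗ[R] M)
    (hf : ∀ a b : A, f (a * b) = f (b * a)) {σ : A} {d : R} (hσ : σ * σ = d • σ + 1) (t : A) :
    f (σ * t * σ * σ) = (d ^ 2 + 1) • f (t * σ) + d • f t := by
  have hσtσ : f (σ * t * σ) = d • f (t * σ) + f t := by
    rw [mul_assoc, hf, mul_assoc, hσ, mul_add, mul_one, mul_smul_comm, map_add, map_smul]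
  rw [mul_assoc _ σ σ, hσ, mul_add, mul_one, mul_smul_comm, map_add, map_smul, hσtσ, hf σ t]
  module

theorem band_coeff_identity {a x w : R} (hx : a * x = 1) (hw : (1 + a ^ 2) * w = 1) :
    1 - -((1 + a ^ 2) * x) * a ^ 6 * (((a - x) ^ 2 + 1) * -(x * w) + (a - x))
      = (1 - a ^ 6) * (1 - a ^ 2) := by
  have hAz : -((1 + a ^ 2) * x) * a ^ 6 * -(x * w) = a ^ 4 := by
    linear_combination a ^ 4 * (a * x + 1) * hx + a ^ 6 * x ^ 2 * hw
  have hAd : -((1 + a ^ 2) * x) * a ^ 6 * (a - x) = a ^ 4 - a ^ 8 := by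
    linear_combination (1 + a ^ 2) * a ^ 4 * (a * x + 1 - a ^ 2) * hx
  have hd : a ^ 4 * ((a - x) ^ 2 + 1) = a ^ 6 - a ^ 4 + a ^ 2 := by
    linear_combination (a ^ 2 * (a * x + 1) - 2 * a ^ 4) * hx
  linear_combination (-((a - x) ^ 2 + 1)) * hAz - hAd - hd

end

/-- Equation (tor) of Theorem 8 (mthm) of the paper. Assume `1 + u²` is a unit
`v` of `R` and set `z = −(u(1+u²))⁻¹`. If `f(tσ₁) = z·f(t)`, then the positive
braid-band-move equation `f(t) = −((1+u²)/u)·u⁶·f(t₁σ₁)` holds iff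
`(1 − u⁶)(1 − u²)·f(t) = 0` in `M`, so `f(t)` generates torsion. -/
theorem torsion_equation (M : Type) [AddCommGroup M] [Module R M]
    (v : Rˣ) (hv : (v : R) = 1 + (u : R) ^ 2)
    (f : TL R u 2 →ₗ[R] M) (hf : ∀ a b : TL R u 2, f (a * b) = f (b * a))
    (hz : f (tT R u 2 * σ₁T R u 2 le_rfl)
      = (-(((u⁻¹ : Rˣ) : R) * ((v⁻¹ : Rˣ) : R))) • f (tT R u 2)) :
    (f (tT R u 2)
      = (-((1 + (u : R) ^ 2) * ((u⁻¹ : Rˣ) : R)) * (u : R) ^ 6) •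
          f (t₁T R u 2 le_rfl * σ₁T R u 2 le_rfl))
    ↔ ((1 - (u : R) ^ 6) * (1 - (u : R) ^ 2)) • f (tT R u 2) = 0 := by
  have hloop : f (t₁T R u 2 le_rfl * σ₁T R u 2 le_rfl)
      = ((((u : R) - ((u⁻¹ : Rˣ) : R)) ^ 2 + 1) * -(((u⁻¹ : Rˣ) : R) * ((v⁻¹ : Rˣ) : R))
          + ((u : R) - ((u⁻¹ : Rˣ) : R))) • f (tT R u 2) := by
    rw [t₁T_mul_σ₁T,
      apply_mul_mul_mul_self_of_mul_self_eq (A := TL R u 2) f hf (σ₁T_mul_self R u 2 le_rfl),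
      hz, smul_smul, add_smul]
  have hv' : (1 + (u : R) ^ 2) * ((v⁻¹ : Rˣ) : R) = 1 := hv ▸ v.mul_inv
  rw [hloop, smul_smul, ← band_coeff_identity u.mul_inv hv', sub_smul, one_smul, sub_eq_zero]
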